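/- arXiv:1508.06948 — 8 statements merged into one kernel-verified Lean document; each statement's English description precedes it below -/
import Mathlib

section
/- Under strong unconfoundedness, i.e., W ⟂⟂ (Y(1),...,Y(T)) | X, the treatment W is conditionally independent of (Y(1),...,Y(T)) given the vector of generalized propensity scores (p(1|X),...,p(T-1|X)). -/
/-!
Conditional independence given `m₂` descends to a coarser `m₁ ≤ m₂` as soon as the conditional
probabilities `P(f ∈ s | m₂)` are `m₁`-measurable: by the tower property and pulling out that
factor, `P(f ∈ s, g ∈ t | m₁) = E[P(f ∈ s | m₂) P(g ∈ t | m₂) | m₁] = P(f ∈ s | m₁) P(g ∈ t | m₁)`.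
For the treatment `W`, `P(W ∈ s | X)` is the sum of the scores `p(w | X)` over `w ∈ s`, and since
the scores sum to one, every score, the omitted last one included, is a.e. a function of the
vector of the first `T` scores.
-/

open MeasureTheory ProbabilityTheory

section Balancing

variable {Ω β γ : Type*} [mΩ : MeasurableSpace Ω] [StandardBorelSpace Ω] {μ : Measure Ω}
  [IsFiniteMeasure μ] [MeasurableSpace β] [MeasurableSpace γ]

theorem ProbabilityTheory.CondIndepFun.of_le_of_aestronglyMeasurable_condExp
    {f : Ω → β} {g : Ω → γ} (hf : Measurable f) (hg : Measurable g) {m₁ m₂ : MeasurableSpace Ω}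
    (hm₁₂ : m₁ ≤ m₂) (hm₁ : m₁ ≤ mΩ) (hm₂ : m₂ ≤ mΩ)
    (hind : CondIndepFun m₂ hm₂ f g μ)
    (hf₁ : ∀ s, MeasurableSet s → AEStronglyMeasurable[m₁] (μ⟦f ⁻¹' s | m₂⟧) μ) :
    CondIndepFun m₁ hm₁ f g μ := by
  rw [condIndepFun_iff_condExp_inter_preimage_eq_mul hf hg] at hind ⊢
  intro s t hs ht
  have hA : μ⟦f ⁻¹' s | m₂⟧ =ᵐ[μ] μ⟦f ⁻¹' s | m₁⟧ :=
    (condExp_of_aestronglyMeasurable' hm₁ (hf₁ s hs) integrable_condExp).symm.trans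
      (condExp_condExp_of_le hm₁₂ hm₂)
  have hA_bdd : ∀ᵐ ω ∂μ, ‖(μ⟦f ⁻¹' s | m₂⟧) ω‖ ≤ 1 := by
    refine ae_bdd_abs_condExp_of_ae_bdd_abs (.of_forall fun ω => ?_)
    by_cases h : ω ∈ f ⁻¹' s <;> simp [h]
  calc μ⟦f ⁻¹' s ∩ g ⁻¹' t | m₁⟧
      =ᵐ[μ] μ[μ⟦f ⁻¹' s ∩ g ⁻¹' t | m₂⟧ | m₁] := (condExp_condExp_of_le hm₁₂ hm₂).symm
    _ =ᵐ[μ] μ[μ⟦f ⁻¹' s | m₂⟧ * μ⟦g ⁻¹' t | m₂⟧ | m₁] := condExp_congr_ae (hind s t hs ht)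
    _ =ᵐ[μ] μ⟦f ⁻¹' s | m₂⟧ * μ[μ⟦g ⁻¹' t | m₂⟧ | m₁] :=
      condExp_stronglyMeasurable_mul_of_bound₀ hm₁ (hf₁ s hs) integrable_condExp 1 hA_bdd
    _ =ᵐ[μ] μ⟦f ⁻¹' s | m₁⟧ * μ⟦g ⁻¹' t | m₁⟧ := hA.mul (condExp_condExp_of_le hm₁₂ hm₂)

end Balancing

section FiniteValued

variable {Ω α : Type*} {mΩ : MeasurableSpace Ω} {μ : Measure Ω} [IsFiniteMeasure μ]
  [MeasurableSpace α] [MeasurableSingletonClass α] {W : Ω → α}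

theorem condExp_preimage_ae_eq_sum (hW : Measurable W) (m : MeasurableSpace Ω) (t : Finset α) :
    μ⟦W ⁻¹' t | m⟧ =ᵐ[μ] ∑ w ∈ t, μ⟦W ⁻¹' {w} | m⟧ := by
  classical
  have hind : (W ⁻¹' t).indicator (fun _ => (1 : ℝ)) =
      ∑ w ∈ t, (W ⁻¹' {w}).indicator fun _ => (1 : ℝ) := by
    ext ω
    simp [Set.indicator_apply, Finset.sum_apply]
  rw [hind]
  exact condExp_finsetSum (fun w _ => (integrable_const (1 : ℝ)).indicator (hW (.singleton w))) m

theorem sum_condExp_preimage_singleton_ae_eq_one [Fintype α] (hW : Measurable W)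
    {m : MeasurableSpace Ω} (hm : m ≤ mΩ) :
    ∑ w, μ⟦W ⁻¹' {w} | m⟧ =ᵐ[μ] 1 := by
  have h := condExp_preimage_ae_eq_sum (μ := μ) hW m Finset.univ
  rw [Finset.coe_univ, Set.preimage_univ, Set.indicator_univ, condExp_const hm] at h
  exact h.symm

theorem aestronglyMeasurable_condExp_preimage [Finite α] (hW : Measurable W)
    {m₁ m₂ : MeasurableSpace Ω} (h : ∀ w, AEStronglyMeasurable[m₁] (μ⟦W ⁻¹' {w} | m₂⟧) μ)
    (s : Set α) :
    AEStronglyMeasurable[m₁] (μ⟦W ⁻¹' s | m₂⟧) μ := by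
  choose q hq_meas hq_ae using h
  obtain ⟨t, rfl⟩ := s.toFinite.exists_finset_coe
  refine ⟨∑ w ∈ t, q w, Finset.stronglyMeasurable_sum t fun w _ => hq_meas w, ?_⟩
  filter_upwards [condExp_preimage_ae_eq_sum hW m₂ t, ae_all_iff.2 hq_ae] with ω h₁ h₂
  simp [h₁, Finset.sum_apply, h₂]

end FiniteValued

theorem aestronglyMeasurable_comap_castSucc_of_sum_ae_eq_one {Ω : Type*} {mΩ : MeasurableSpace Ω}
    {μ : Measure Ω} {T : ℕ} {p : Fin (T + 1) → Ω → ℝ} (hsum : ∑ w, p w =ᵐ[μ] 1)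
    (w : Fin (T + 1)) :
    AEStronglyMeasurable[MeasurableSpace.comap (fun ω (i : Fin T) => p i.castSucc ω) inferInstance]
      (p w) μ := by
  have hcoord (i : Fin T) :=
    (measurable_pi_apply i).comp (comap_measurable fun ω (i : Fin T) => p i.castSucc ω)
  induction w using Fin.lastCases with
  | last =>
    refine ⟨1 - ∑ i : Fin T, p i.castSucc,
      stronglyMeasurable_const.sub (Finset.stronglyMeasurable_sum _ fun i _ =>
        (hcoord i).stronglyMeasurable), ?_⟩
    filter_upwards [hsum] with ω hω
    simp only [Finset.sum_apply, Fin.sum_univ_castSucc, Pi.one_apply] at hω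
    simp only [Pi.sub_apply, Pi.one_apply, Finset.sum_apply]
    linarith
  | cast i => exact (hcoord i).stronglyMeasurable.aestronglyMeasurable

theorem strong_unconf_gps_vector_general {Ω E : Type*} [mΩ : MeasurableSpace Ω]
    [StandardBorelSpace Ω] [MeasurableSpace E]
    (μ : Measure Ω) [IsProbabilityMeasure μ] (T : ℕ)
    (W : Ω → Fin (T + 1)) (X : Ω → E) (Y : Fin (T + 1) → Ω → ℝ)
    (hW : Measurable W) (hY : ∀ w, Measurable (Y w))
    (p : Fin (T + 1) → Ω → ℝ)
    (hp : ∀ w, p w = μ[(fun ω => if W ω = w then (1 : ℝ) else 0) |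
        MeasurableSpace.comap X inferInstance])
    (hmX : MeasurableSpace.comap X inferInstance ≤ mΩ)
    (hmp : MeasurableSpace.comap (fun ω (w : Fin T) => p w.castSucc ω) inferInstance ≤ mΩ)
    (hstrong : CondIndepFun (MeasurableSpace.comap X inferInstance) hmX
        W (fun ω (w : Fin (T + 1)) => Y w ω) μ) :
    CondIndepFun (MeasurableSpace.comap (fun ω (w : Fin T) => p w.castSucc ω) inferInstance) hmp
        W (fun ω (w : Fin (T + 1)) => Y w ω) μ := by
  have hpX (w : Fin (T + 1)) : p w = μ⟦W ⁻¹' {w} | MeasurableSpace.comap X inferInstance⟧ := by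
    rw [hp w]
    congr 1
    ext ω
    by_cases h : W ω = w <;> simp [h]
  have hsum : ∑ w, p w =ᵐ[μ] 1 := by
    simpa only [hpX] using sum_condExp_preimage_singleton_ae_eq_one hW hmX
  have hle : MeasurableSpace.comap (fun ω (w : Fin T) => p w.castSucc ω) inferInstance ≤
      MeasurableSpace.comap X inferInstance :=
    -- `(_)` makes Lean unify the measurable space on `Ω` (here `σ(X)`) instead of synthesizing it
    Measurable.comap_le <| @measurable_pi_lambda _ _ _ (_) _ _ fun i => by
      rw [hpX]
      exact stronglyMeasurable_condExp.measurable
  refine hstrong.of_le_of_aestronglyMeasurable_condExp hW (measurable_pi_lambda _ hY) hle hmp hmX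
    fun s _ => aestronglyMeasurable_condExp_preimage hW (fun w => ?_) s
  exact hpX w ▸ aestronglyMeasurable_comap_castSucc_of_sum_ae_eq_one hsum w

/-- Under strong unconfoundedness `W ⟂⟂ (Y(1),...,Y(T)) | X`, the treatment
is conditionally independent of the potential outcomes given the vector of generalized
propensity scores `(p(1|X),...,p(T-1|X))` (here treatments are indexed by `Fin (T+1)`,
and we condition on the scores of the first `T` levels). -/
theorem strong_unconf_gps_vector {Ω E : Type*} [mΩ : MeasurableSpace Ω]
    [StandardBorelSpace Ω] [MeasurableSpace E]
    (μ : Measure Ω) [IsProbabilityMeasure μ] (T : ℕ)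
    (W : Ω → Fin (T + 1)) (X : Ω → E) (Y : Fin (T + 1) → Ω → ℝ)
    (hW : Measurable W) (hX : Measurable X) (hY : ∀ w, Measurable (Y w))
    (p : Fin (T + 1) → Ω → ℝ)
    (hp : ∀ w, p w = μ[(fun ω => if W ω = w then (1 : ℝ) else 0) |
        MeasurableSpace.comap X inferInstance])
    (hmX : MeasurableSpace.comap X inferInstance ≤ mΩ)
    (hmp : MeasurableSpace.comap (fun ω (w : Fin T) => p w.castSucc ω) inferInstance ≤ mΩ)
    (hstrong : CondIndepFun (MeasurableSpace.comap X inferInstance) hmX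
        W (fun ω (w : Fin (T + 1)) => Y w ω) μ) :
    CondIndepFun (MeasurableSpace.comap (fun ω (w : Fin T) => p w.castSucc ω) inferInstance) hmp
        W (fun ω (w : Fin (T + 1)) => Y w ω) μ :=
  strong_unconf_gps_vector_general (mΩ := mΩ) μ T W X Y hW hY p hp hmX hmp hstrong
end

section
/- The generalized propensity score is a balancing score for each treatment level: for every w, P(W = w | X, p(w|X)) = p(w|X) almost surely, i.e., the treatment indicator D(w) = 1{W = w} is conditionally independent of X given p(w|X). -/
/-! The propensity score `p w = P(W = w | X)` is itself `σ(p w)`-measurable, so conditioning the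
treatment indicator on any σ-algebra between `σ(p w)` and `σ(X)` returns `p w` (tower property).
For conditional independence, with `A = {W = w}` and `B ∈ σ(X)` one pulls `1_B` out of
`E[1_A 1_B | X]`, leaving `p w · 1_B`, and then pulls `p w` out of the conditional expectation
given `σ(p w)`. -/

open MeasureTheory ProbabilityTheory

section

variable {Ω : Type*}

theorem condExp_ae_eq_condExp_of_le_of_stronglyMeasurable {E : Type*} [NormedAddCommGroup E]
    [NormedSpace ℝ E] [CompleteSpace E] {m₁ m₂ m₀ : MeasurableSpace Ω} {μ : Measure Ω}
    [IsFiniteMeasure μ] (hm₂₁ : m₂ ≤ m₁) (hm₁ : m₁ ≤ m₀) {f : Ω → E}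
    (hf : StronglyMeasurable[m₂] (μ[f | m₁])) :
    μ[f | m₂] =ᵐ[μ] μ[f | m₁] :=
  (condExp_condExp_of_le hm₂₁ hm₁).symm.trans <| by
    rw [condExp_of_stronglyMeasurable (hm₂₁.trans hm₁) hf integrable_condExp]

theorem condExp_inter_ae_eq_mul_of_stronglyMeasurable {m m' m₀ : MeasurableSpace Ω}
    {μ : Measure Ω} [IsFiniteMeasure μ] (hm'm : m' ≤ m) (hm : m ≤ m₀) {A B : Set Ω}
    (hA : MeasurableSet A) (hB : MeasurableSet[m] B)
    (hAm' : StronglyMeasurable[m'] (μ⟦A | m⟧)) :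
    μ⟦A ∩ B | m'⟧ =ᵐ[μ] μ⟦A | m'⟧ * μ⟦B | m'⟧ := by
  have hB₀ : MeasurableSet B := hm _ hB
  have hpull : μ⟦A ∩ B | m⟧ =ᵐ[μ] μ⟦A | m⟧ * B.indicator 1 := by
    rw [← Pi.one_def, Set.inter_indicator_one]
    refine condExp_mul_of_stronglyMeasurable_right (stronglyMeasurable_one.indicator hB) ?_
      ((integrable_const 1).indicator hA)
    rw [← Set.inter_indicator_one]
    exact (integrable_const 1).indicator (hA.inter hB₀)
  have hint_mul : Integrable (μ⟦A | m⟧ * B.indicator 1) μ :=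
    (integrable_condExp (m := m) (f := A.indicator fun _ => 1).indicator hB₀).congr <|
      .of_forall fun ω => by by_cases hω : ω ∈ B <;> simp [hω]
  calc μ⟦A ∩ B | m'⟧
    _ =ᵐ[μ] μ[μ⟦A ∩ B | m⟧ | m'] := (condExp_condExp_of_le hm'm hm).symm
    _ =ᵐ[μ] μ[μ⟦A | m⟧ * B.indicator 1 | m'] := condExp_congr_ae hpull
    _ =ᵐ[μ] μ⟦A | m⟧ * μ⟦B | m'⟧ :=
      condExp_mul_of_stronglyMeasurable_left hAm' hint_mul ((integrable_const 1).indicator hB₀)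
    _ =ᵐ[μ] μ⟦A | m'⟧ * μ⟦B | m'⟧ :=
      (condExp_ae_eq_condExp_of_le_of_stronglyMeasurable hm'm hm hAm').symm.mul (by rfl)

theorem condIndep_generateFrom_singleton_of_stronglyMeasurable {m m' m₀ : MeasurableSpace Ω}
    [StandardBorelSpace Ω] {μ : Measure Ω} [IsFiniteMeasure μ] (hm'm : m' ≤ m)
    (hm : m ≤ m₀) {A : Set Ω} (hA : MeasurableSet A)
    (hAm' : StronglyMeasurable[m'] (μ⟦A | m⟧)) :
    CondIndep m' (MeasurableSpace.generateFrom {A}) m (hm'm.trans hm) μ := by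
  have hA' : ∀ s ∈ ({A} : Set (Set Ω)), MeasurableSet s := by rintro _ rfl; exact hA
  refine CondIndepSets.condIndep (MeasurableSpace.generateFrom_le hA') hm
    (IsPiSystem.singleton A) (@MeasurableSpace.isPiSystem_measurableSet Ω m) rfl
    (@MeasurableSpace.generateFrom_measurableSet Ω m).symm ?_
  rw [condIndepSets_iff _ _ {A} {s | MeasurableSet[m] s} hA' fun _ hs => hm _ hs]
  rintro _ B rfl hB
  exact condExp_inter_ae_eq_mul_of_stronglyMeasurable hm'm hm hA hB hAm'

end

theorem gps_is_balancing_score_general {Ω E : Type*} [mΩ : MeasurableSpace Ω]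
    [StandardBorelSpace Ω] [MeasurableSpace E]
    (μ : Measure Ω) [IsProbabilityMeasure μ] (T : ℕ)
    (W : Ω → Fin T) (X : Ω → E) (hW : Measurable W) (hX : Measurable X)
    (p : Fin T → Ω → ℝ)
    (hp : ∀ w, p w = μ[(fun ω => if W ω = w then (1 : ℝ) else 0) |
        MeasurableSpace.comap X inferInstance])
    (hmp : ∀ w : Fin T, MeasurableSpace.comap (p w) inferInstance ≤ mΩ) :
    ∀ w : Fin T,
      (μ[(fun ω => if W ω = w then (1 : ℝ) else 0) |
          MeasurableSpace.comap (fun ω => (X ω, p w ω)) inferInstance] =ᵐ[μ] p w)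
      ∧ CondIndepFun (MeasurableSpace.comap (p w) inferInstance) (hmp w)
          (fun ω => if W ω = w then (1 : ℝ) else 0) X μ := by
  intro w
  have hD : (fun ω => if W ω = w then (1 : ℝ) else 0) =
      (W ⁻¹' {w}).indicator fun _ => 1 := by
    ext ω; by_cases h : W ω = w <;> simp [h]
  have hpX : Measurable[MeasurableSpace.comap X inferInstance] (p w) :=
    (hp w ▸ stronglyMeasurable_condExp).measurable
  have hpXp : Measurable[MeasurableSpace.comap (fun ω => (X ω, p w ω)) inferInstance] (p w) :=
    measurable_snd.comp (comap_measurable _)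
  have hXp_le_X := ((comap_measurable X).prodMk hpX).comap_le
  refine ⟨?_, ?_⟩
  · have htower := condExp_ae_eq_condExp_of_le_of_stronglyMeasurable hXp_le_X hX.comap_le
      (f := fun ω => if W ω = w then (1 : ℝ) else 0)
      (by rw [← hp w]; exact hpXp.stronglyMeasurable)
    rwa [← hp w] at htower
  · have hDA : Measurable[MeasurableSpace.generateFrom {W ⁻¹' {w}}]
        ((W ⁻¹' {w}).indicator fun _ => (1 : ℝ)) :=
      measurable_const.indicator (MeasurableSpace.measurableSet_generateFrom rfl)
    have hAp : StronglyMeasurable[MeasurableSpace.comap (p w) inferInstance]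
        (μ⟦W ⁻¹' {w} | MeasurableSpace.comap X inferInstance⟧) := by
      rw [← hD, ← hp w]
      exact (comap_measurable (p w)).stronglyMeasurable
    rw [condIndepFun_iff_condIndep, hD]
    exact condIndep_of_condIndep_of_le_left
      (condIndep_generateFrom_singleton_of_stronglyMeasurable (hpXp.comap_le.trans hXp_le_X)
        hX.comap_le (hW (measurableSet_singleton w)) hAp) hDA.comap_le

/-- The generalized propensity score is a balancing score for each treatment
level: for every `w`, `P(W = w | X, p(w|X)) = p(w|X)` a.s., i.e. `D(w) = 1{W = w}` is
conditionally independent of `X` given `p(w|X)`. -/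
theorem gps_is_balancing_score {Ω E : Type*} [mΩ : MeasurableSpace Ω]
    [StandardBorelSpace Ω] [MeasurableSpace E]
    (μ : Measure Ω) [IsProbabilityMeasure μ] (T : ℕ)
    (W : Ω → Fin T) (X : Ω → E) (hW : Measurable W) (hX : Measurable X)
    (p : Fin T → Ω → ℝ)
    (hp : ∀ w, p w = μ[(fun ω => if W ω = w then (1 : ℝ) else 0) |
        MeasurableSpace.comap X inferInstance])
    (hmXp : ∀ w : Fin T,
      MeasurableSpace.comap (fun ω => (X ω, p w ω)) inferInstance ≤ mΩ)
    (hmp : ∀ w : Fin T, MeasurableSpace.comap (p w) inferInstance ≤ mΩ) :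
    ∀ w : Fin T,
      (μ[(fun ω => if W ω = w then (1 : ℝ) else 0) |
          MeasurableSpace.comap (fun ω => (X ω, p w ω)) inferInstance] =ᵐ[μ] p w)
      ∧ CondIndepFun (MeasurableSpace.comap (p w) inferInstance) (hmp w)
          (fun ω => if W ω = w then (1 : ℝ) else 0) X μ :=
  gps_is_balancing_score_general (mΩ := mΩ) μ T W X hW hX p hp hmp
end

section
/- Suppose the assignment mechanism is weakly unconfounded: for each w, D(w) = 1{W = w} is conditionally independent of Y(w) given X. Then for each w, D(w) is conditionally independent of Y(w) given the scalar p(w|X) = P(W = w | X). -/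
/-!
Write `D = 1_A` with `A = {W = w}`, so that `p = P(A | X)` is `σ(X)`-measurable and hence
`σ(p) ⊆ σ(X)`. By the tower property and pulling out `p`,
`P(A ∩ B | p) = E[P(A ∩ B | X) | p] = E[p · P(B | X) | p] = p · P(B | p)` for every event
`B = {Y(w) ∈ t}`, and `P(A | p) = p`. Since `σ(D)` is generated by the π-system `{A}`, this
product rule is already conditional independence of `D` and `Y(w)` given `p`.
-/

open MeasureTheory ProbabilityTheory MeasurableSpace

section

variable {Ω : Type*} {m m₁ m₂ : MeasurableSpace Ω} [mΩ : MeasurableSpace Ω] {μ : Measure Ω}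

theorem condExp_inter_ae_eq_mul_of_le [IsFiniteMeasure μ] (hm₁₂ : m₁ ≤ m₂) (hm₂ : m₂ ≤ mΩ)
    {s t : Set Ω} (hs : AEStronglyMeasurable[m₁] (μ⟦s | m₂⟧) μ)
    (h : μ⟦s ∩ t | m₂⟧ =ᵐ[μ] μ⟦s | m₂⟧ * μ⟦t | m₂⟧) :
    μ⟦s ∩ t | m₁⟧ =ᵐ[μ] μ⟦s | m₁⟧ * μ⟦t | m₁⟧ := by
  have hs₁ : μ⟦s | m₁⟧ =ᵐ[μ] μ⟦s | m₂⟧ :=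
    (condExp_condExp_of_le hm₁₂ hm₂).symm.trans
      (condExp_of_aestronglyMeasurable' (hm₁₂.trans hm₂) hs integrable_condExp)
  calc μ⟦s ∩ t | m₁⟧ =ᵐ[μ] μ[μ⟦s ∩ t | m₂⟧ | m₁] := (condExp_condExp_of_le hm₁₂ hm₂).symm
    _ =ᵐ[μ] μ[μ⟦s | m₂⟧ * μ⟦t | m₂⟧ | m₁] := condExp_congr_ae h
    _ =ᵐ[μ] μ⟦s | m₂⟧ * μ[μ⟦t | m₂⟧ | m₁] :=
      condExp_mul_of_aestronglyMeasurable_left hs (integrable_condExp.congr h) integrable_condExp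
    _ =ᵐ[μ] μ⟦s | m₁⟧ * μ⟦t | m₁⟧ := hs₁.symm.mul (condExp_condExp_of_le hm₁₂ hm₂)

theorem condIndepFun_indicator_iff [StandardBorelSpace Ω] [IsFiniteMeasure μ] (hm : m ≤ mΩ)
    {γ : Type*} [mγ : MeasurableSpace γ] {s : Set Ω} {g : Ω → γ} (hs : MeasurableSet s)
    (hg : Measurable g) :
    CondIndepFun m hm (s.indicator fun _ ↦ (1 : ℝ)) g μ ↔
      ∀ t, MeasurableSet t → μ⟦s ∩ g ⁻¹' t | m⟧ =ᵐ[μ] μ⟦s | m⟧ * μ⟦g ⁻¹' t | m⟧ := by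
  constructor
  · intro h t ht
    have hpre : (s.indicator fun _ ↦ (1 : ℝ)) ⁻¹' {1} = s := by
      simp [Set.indicator_const_preimage_eq_union]
    have := (condIndepFun_iff_condExp_inter_preimage_eq_mul
      (measurable_const.indicator hs) hg).mp h {1} t (measurableSet_singleton 1) ht
    exact hpre ▸ this
  · intro h
    rw [condIndepFun_iff_condIndep]
    refine condIndep_of_condIndep_of_le_left ?_
      (comap_indicator_const_le_generateFrom_singleton s 1)
    refine CondIndepSets.condIndep (generateFrom_singleton_le hs) hg.comap_le
      (IsPiSystem.singleton s) (@isPiSystem_measurableSet _ (MeasurableSpace.comap g mγ)) rfl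
      (@generateFrom_measurableSet _ (MeasurableSpace.comap g mγ)).symm ?_
    rw [condIndepSets_iff _ _ {s} {t | MeasurableSet[MeasurableSpace.comap g mγ] t}
      (by simpa using hs) (fun _ ht ↦ hg.comap_le _ ht)]
    rintro _ _ rfl ⟨t, ht, rfl⟩
    exact h t ht

end

theorem weak_unconf_gps_general {Ω E : Type*} [mΩ : MeasurableSpace Ω]
    [StandardBorelSpace Ω] [MeasurableSpace E]
    (μ : Measure Ω) [IsProbabilityMeasure μ] (T : ℕ)
    (W : Ω → Fin T) (X : Ω → E) (Y : Fin T → Ω → ℝ)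
    (hW : Measurable W) (hY : ∀ w, Measurable (Y w))
    (p : Fin T → Ω → ℝ)
    (hp : ∀ w, p w = μ[(fun ω => if W ω = w then (1 : ℝ) else 0) |
        MeasurableSpace.comap X inferInstance])
    (hmX : MeasurableSpace.comap X inferInstance ≤ mΩ)
    (hmp : ∀ w : Fin T, MeasurableSpace.comap (p w) inferInstance ≤ mΩ)
    (hweak : ∀ w : Fin T, CondIndepFun (MeasurableSpace.comap X inferInstance) hmX
        (fun ω => if W ω = w then (1 : ℝ) else 0) (Y w) μ) :
    ∀ w : Fin T, CondIndepFun (MeasurableSpace.comap (p w) inferInstance) (hmp w)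
        (fun ω => if W ω = w then (1 : ℝ) else 0) (Y w) μ := by
  intro w
  set A := W ⁻¹' {w}
  have hA : MeasurableSet A := hW (measurableSet_singleton w)
  have hD : (fun ω ↦ if W ω = w then (1 : ℝ) else 0) = A.indicator fun _ ↦ 1 := by
    ext ω
    by_cases h : W ω = w <;> simp [A, h]
  have hpA : μ⟦A | MeasurableSpace.comap X inferInstance⟧ = p w := by rw [hp w, hD]
  have hpX : MeasurableSpace.comap (p w) inferInstance ≤ MeasurableSpace.comap X inferInstance :=
    (hpA ▸ stronglyMeasurable_condExp).measurable.comap_le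
  have hweak_w := hweak w
  rw [hD, condIndepFun_indicator_iff hmX hA (hY w)] at hweak_w
  rw [hD, condIndepFun_indicator_iff (hmp w) hA (hY w)]
  exact fun t ht ↦ condExp_inter_ae_eq_mul_of_le hpX hmX
    (hpA ▸ (comap_measurable (p w)).aestronglyMeasurable) (hweak_w t ht)

/-- If the assignment is weakly unconfounded (`D(w) ⟂⟂ Y(w) | X` for each `w`),
then for each `w`, `D(w)` is conditionally independent of `Y(w)` given the scalar
generalized propensity score `p(w|X)`. -/
theorem weak_unconf_gps {Ω E : Type*} [mΩ : MeasurableSpace Ω]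
    [StandardBorelSpace Ω] [MeasurableSpace E]
    (μ : Measure Ω) [IsProbabilityMeasure μ] (T : ℕ)
    (W : Ω → Fin T) (X : Ω → E) (Y : Fin T → Ω → ℝ)
    (hW : Measurable W) (hX : Measurable X) (hY : ∀ w, Measurable (Y w))
    (p : Fin T → Ω → ℝ)
    (hp : ∀ w, p w = μ[(fun ω => if W ω = w then (1 : ℝ) else 0) |
        MeasurableSpace.comap X inferInstance])
    (hoverlap : ∀ w, ∀ᵐ ω ∂μ, 0 < p w ω)
    (hmX : MeasurableSpace.comap X inferInstance ≤ mΩ)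
    (hmp : ∀ w : Fin T, MeasurableSpace.comap (p w) inferInstance ≤ mΩ)
    (hweak : ∀ w : Fin T, CondIndepFun (MeasurableSpace.comap X inferInstance) hmX
        (fun ω => if W ω = w then (1 : ℝ) else 0) (Y w) μ) :
    ∀ w : Fin T, CondIndepFun (MeasurableSpace.comap (p w) inferInstance) (hmp w)
        (fun ω => if W ω = w then (1 : ℝ) else 0) (Y w) μ :=
  weak_unconf_gps_general (mΩ := mΩ) μ T W X Y hW hY p hp hmX hmp hweak
end

section
/- Under weak unconfoundedness and overlap, the average treatment effect between levels w and w' satisfies τ(w,w') = E[Y(w') − Y(w)] = E[ E[Y^obs | W = w', p(w'|X)] ] − E[ E[Y^obs | W = w, p(w|X)] ]. -/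
/-!
Write `e = p(w|X) = E[1{W=w} | X]`. Weak unconfoundedness makes `1{W=w}` and `Y(w)`
conditionally independent given `X`, so `E[1{W=w} Y(w) | X] = e · E[Y(w) | X]`. As `e` is
`σ(X)`-measurable, conditioning further on `σ(e) ⊆ σ(X)` gives
`E[1{W=w} Y^obs | e] = e · E[Y(w) | e]` and `E[1{W=w} | e] = e`. By overlap the ratio of the two
is `E[Y(w) | e]`, whose mean is `E[Y(w)]`.
-/

open MeasureTheory ProbabilityTheory

section

variable {Ω : Type*} {m m₁ m₂ mΩ : MeasurableSpace Ω} {μ : Measure Ω}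

lemma integral_mul_eq_of_forall_setIntegral_eq (hm : m ≤ mΩ)
    [SigmaFinite (μ.trim hm)] {ρ₁ ρ₂ g : Ω → ℝ} (hρ₁ : Integrable ρ₁ μ) (hρ₂ : Integrable ρ₂ μ)
    (hg : StronglyMeasurable[m] g) (hρ₁g : Integrable (ρ₁ * g) μ) (hρ₂g : Integrable (ρ₂ * g) μ)
    (h : ∀ s, MeasurableSet[m] s → ∫ x in s, ρ₁ x ∂μ = ∫ x in s, ρ₂ x ∂μ) :
    ∫ x, ρ₁ x * g x ∂μ = ∫ x, ρ₂ x * g x ∂μ := by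
  have hcond : μ[ρ₁|m] =ᵐ[μ] μ[ρ₂|m] :=
    ae_eq_condExp_of_forall_setIntegral_eq hm hρ₂ (fun _ _ _ => integrable_condExp.integrableOn)
      (fun s hs _ => (setIntegral_condExp hm hρ₁ hs).trans (h s hs))
      stronglyMeasurable_condExp.aestronglyMeasurable
  calc ∫ x, ρ₁ x * g x ∂μ = ∫ x, μ[ρ₁ * g|m] x ∂μ := (integral_condExp hm).symm
    _ = ∫ x, (μ[ρ₁|m] * g) x ∂μ :=
      integral_congr_ae (condExp_mul_of_stronglyMeasurable_right hg hρ₁g hρ₁)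
    _ = ∫ x, (μ[ρ₂|m] * g) x ∂μ := integral_congr_ae (hcond.mul .rfl)
    _ = ∫ x, μ[ρ₂ * g|m] x ∂μ :=
      integral_congr_ae (condExp_mul_of_stronglyMeasurable_right hg hρ₂g hρ₂).symm
    _ = ∫ x, ρ₂ x * g x ∂μ := integral_condExp hm

lemma abs_indicator_one_le_one (A : Set Ω) (ω : Ω) : |A.indicator (1 : Ω → ℝ) ω| ≤ 1 := by
  by_cases h : ω ∈ A <;> simp [h]

lemma condExp_comap_condExp [IsFiniteMeasure μ] (hm : m ≤ mΩ) (f : Ω → ℝ) :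
    μ[f|MeasurableSpace.comap (μ[f|m]) inferInstance] =ᵐ[μ] μ[f|m] := by
  have hle : MeasurableSpace.comap (μ[f|m]) inferInstance ≤ m :=
    stronglyMeasurable_condExp.measurable.comap_le
  calc μ[f|MeasurableSpace.comap (μ[f|m]) inferInstance]
      =ᵐ[μ] μ[μ[f|m]|MeasurableSpace.comap (μ[f|m]) inferInstance] :=
        (condExp_condExp_of_le hle hm).symm
    _ = μ[f|m] := condExp_of_stronglyMeasurable (hle.trans hm)
        (comap_measurable _).stronglyMeasurable integrable_condExp

lemma condExp_eq_mul_condExp_of_le (h₁₂ : m₁ ≤ m₂) (hm₂ : m₂ ≤ mΩ)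
    [SigmaFinite (μ.trim hm₂)] {f g q : Ω → ℝ} (hq : StronglyMeasurable[m₁] q)
    (h : μ[f|m₂] =ᵐ[μ] q * μ[g|m₂]) :
    μ[f|m₁] =ᵐ[μ] q * μ[g|m₁] :=
  calc μ[f|m₁] =ᵐ[μ] μ[μ[f|m₂]|m₁] := (condExp_condExp_of_le h₁₂ hm₂).symm
    _ =ᵐ[μ] μ[q * μ[g|m₂]|m₁] := condExp_congr_ae h
    _ =ᵐ[μ] q * μ[μ[g|m₂]|m₁] :=
      condExp_mul_of_stronglyMeasurable_left hq (integrable_condExp.congr h) integrable_condExp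
    _ =ᵐ[μ] q * μ[g|m₁] := Filter.EventuallyEq.rfl.mul (condExp_condExp_of_le h₁₂ hm₂)

lemma integrable_condExp_indicator_one_mul (hm : m ≤ mΩ) (A : Set Ω) {h : Ω → ℝ}
    (hh : Integrable h μ) : Integrable (μ[A.indicator 1|m] * h) μ :=
  hh.bdd_mul (stronglyMeasurable_condExp.mono hm).aestronglyMeasurable
    (ae_bdd_abs_condExp_of_ae_bdd_abs (.of_forall (abs_indicator_one_le_one A)))

lemma setIntegral_condExp_indicator_one_eq [IsFiniteMeasure μ] (hm : m ≤ mΩ) {A B s : Set Ω}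
    (hA : MeasurableSet A) (hB : MeasurableSet B) (hs : MeasurableSet[m] s)
    (hAB : μ[(A ∩ B).indicator 1|m] =ᵐ[μ] μ[A.indicator (1 : Ω → ℝ)|m] * μ[B.indicator 1|m]) :
    ∫ ω in B ∩ s, μ[A.indicator 1|m] ω ∂μ = ∫ ω in B ∩ s, A.indicator (1 : Ω → ℝ) ω ∂μ := by
  set q := μ[A.indicator (1 : Ω → ℝ)|m]
  have hBint : Integrable (B.indicator (1 : Ω → ℝ)) μ := (integrable_const 1).indicator hB
  have hqB : Integrable (q * B.indicator 1) μ := integrable_condExp_indicator_one_mul hm A hBint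
  calc ∫ ω in B ∩ s, q ω ∂μ = ∫ ω in s, q ω * B.indicator 1 ω ∂μ := by
        rw [Set.inter_comm, ← setIntegral_indicator hB]
        congr 1 with ω
        by_cases hω : ω ∈ B <;> simp [hω]
    _ = ∫ ω in s, μ[q * B.indicator 1|m] ω ∂μ := (setIntegral_condExp hm hqB hs).symm
    _ = ∫ ω in s, q ω * μ[B.indicator 1|m] ω ∂μ := integral_congr_ae <| ae_restrict_of_ae <|
        condExp_mul_of_stronglyMeasurable_left stronglyMeasurable_condExp hqB hBint
    _ = ∫ ω in s, μ[(A ∩ B).indicator 1|m] ω ∂μ := integral_congr_ae (ae_restrict_of_ae hAB.symm)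
    _ = ∫ ω in s, (A ∩ B).indicator 1 ω ∂μ :=
        setIntegral_condExp hm ((integrable_const 1).indicator (hA.inter hB)) hs
    _ = ∫ ω in B ∩ s, A.indicator 1 ω ∂μ := by
        rw [Set.inter_comm A, ← Set.indicator_indicator, setIntegral_indicator hB, Set.inter_comm]

theorem ProbabilityTheory.CondIndepFun.condExp_indicator_mul [StandardBorelSpace Ω]
    [IsFiniteMeasure μ] {hm : m ≤ mΩ} {A : Set Ω} {g : Ω → ℝ}
    (hindep : CondIndepFun m hm (A.indicator (1 : Ω → ℝ)) g μ) (hA : MeasurableSet A)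
    (hg : Measurable g) (hgi : Integrable g μ) :
    μ[A.indicator 1 * g|m] =ᵐ[μ] μ[A.indicator 1|m] * μ[g|m] := by
  set q := μ[A.indicator (1 : Ω → ℝ)|m]
  have hqg : Integrable (q * g) μ := integrable_condExp_indicator_one_mul hm A hgi
  have h1A : Integrable (A.indicator (1 : Ω → ℝ)) μ := (integrable_const 1).indicator hA
  have h1Ag : Integrable (A.indicator 1 * g) μ :=
    hgi.bdd_mul (measurable_one.indicator hA).aestronglyMeasurable
      (.of_forall (abs_indicator_one_le_one A))
  have hpre : A.indicator (1 : Ω → ℝ) ⁻¹' {1} = A := by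
    ext ω; by_cases h : ω ∈ A <;> simp [h]
  -- On an `m`-set `s`, `q` and `1_A` have the same integrals over the generators `g ⁻¹' t` of
  -- `σ(g)`, hence the same integrals against `g`.
  have hset : ∀ s, MeasurableSet[m] s →
      ∫ ω in s, q ω * g ω ∂μ = ∫ ω in s, A.indicator 1 ω * g ω ∂μ := by
    intro s hs
    refine integral_mul_eq_of_forall_setIntegral_eq (μ := μ.restrict s) hg.comap_le
      integrable_condExp.restrict h1A.restrict (comap_measurable g).stronglyMeasurable
      hqg.restrict h1Ag.restrict ?_
    rintro _ ⟨t, ht, rfl⟩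
    have hindep_t := (condIndepFun_iff_condExp_inter_preimage_eq_mul
      (measurable_one.indicator hA) hg).mp hindep {1} t (measurableSet_singleton 1) ht
    rw [hpre] at hindep_t
    simpa only [Measure.restrict_restrict (hg ht)] using
      setIntegral_condExp_indicator_one_eq hm hA (hg ht) hs hindep_t
  refine (ae_eq_condExp_of_forall_setIntegral_eq hm h1Ag
    (fun _ _ _ => (integrable_condExp_indicator_one_mul hm A integrable_condExp).integrableOn)
    (fun s hs _ => ?_)
    (stronglyMeasurable_condExp.mul stronglyMeasurable_condExp).aestronglyMeasurable).symm
  calc ∫ ω in s, (q * μ[g|m]) ω ∂μ = ∫ ω in s, μ[q * g|m] ω ∂μ := integral_congr_ae <|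
        ae_restrict_of_ae (condExp_mul_of_stronglyMeasurable_left
          stronglyMeasurable_condExp hqg hgi).symm
    _ = ∫ ω in s, q ω * g ω ∂μ := setIntegral_condExp hm hqg hs
    _ = ∫ ω in s, (A.indicator (1 : Ω → ℝ) * g) ω ∂μ := hset s hs

theorem integral_condExp_indicator_mul_div_condExp_indicator [StandardBorelSpace Ω]
    [IsFiniteMeasure μ] {hm : m ≤ mΩ} {A : Set Ω} {g q : Ω → ℝ}
    (hindep : CondIndepFun m hm (A.indicator (1 : Ω → ℝ)) g μ) (hA : MeasurableSet A)
    (hg : Measurable g) (hgi : Integrable g μ) (hq : q = μ[A.indicator 1|m])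
    (hpos : ∀ᵐ ω ∂μ, 0 < q ω) :
    ∫ ω, μ[A.indicator 1 * g|MeasurableSpace.comap q inferInstance] ω
        / μ[A.indicator 1|MeasurableSpace.comap q inferInstance] ω ∂μ
      = ∫ ω, g ω ∂μ := by
  subst hq
  set mq := MeasurableSpace.comap (μ[A.indicator (1 : Ω → ℝ)|m]) inferInstance
  have hle : mq ≤ m := stronglyMeasurable_condExp.measurable.comap_le
  have hden : μ[A.indicator 1|mq] =ᵐ[μ] μ[A.indicator 1|m] := condExp_comap_condExp hm _
  have hnum : μ[A.indicator 1 * g|mq] =ᵐ[μ] μ[A.indicator 1|m] * μ[g|mq] :=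
    condExp_eq_mul_condExp_of_le hle hm (comap_measurable _).stronglyMeasurable
      (hindep.condExp_indicator_mul hA hg hgi)
  calc _ = ∫ ω, μ[g|mq] ω ∂μ := by
        refine integral_congr_ae ?_
        filter_upwards [hden, hnum, hpos] with ω hden hnum hpos
        rw [hden, hnum, Pi.mul_apply, mul_div_cancel_left₀ _ hpos.ne']
    _ = ∫ ω, g ω ∂μ := integral_condExp (hle.trans hm)

theorem integral_eq_integral_condExp_obs_given_gps [StandardBorelSpace Ω] [IsFiniteMeasure μ]
    {hm : m ≤ mΩ} {ι : Type*} [DecidableEq ι] [MeasurableSpace ι] [MeasurableSingletonClass ι]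
    {W : Ω → ι} {Y : ι → Ω → ℝ} {v : ι} {p : Ω → ℝ} (hW : Measurable W) (hY : Measurable (Y v))
    (hYint : Integrable (Y v) μ)
    (hp : p = μ[(fun ω => if W ω = v then (1 : ℝ) else 0)|m]) (hoverlap : ∀ᵐ ω ∂μ, 0 < p ω)
    (hweak : CondIndepFun m hm (fun ω => if W ω = v then (1 : ℝ) else 0) (Y v) μ) :
    ∫ ω, Y v ω ∂μ
      = ∫ ω, μ[(fun ω' => (if W ω' = v then (1 : ℝ) else 0) * Y (W ω') ω')|
            MeasurableSpace.comap p inferInstance] ω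
          / μ[(fun ω' => if W ω' = v then (1 : ℝ) else 0)|
            MeasurableSpace.comap p inferInstance] ω ∂μ := by
  have hind : (fun ω => if W ω = v then (1 : ℝ) else 0) = (W ⁻¹' {v}).indicator 1 := by
    funext ω; by_cases h : W ω = v <;> simp [h]
  have hobs : (fun ω => (if W ω = v then (1 : ℝ) else 0) * Y (W ω) ω)
      = (W ⁻¹' {v}).indicator 1 * Y v := by
    funext ω; by_cases h : W ω = v <;> simp [h]
  rw [hind] at hp hweak
  rw [hobs, hind]
  exact (integral_condExp_indicator_mul_div_condExp_indicator hweak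
    (hW (measurableSet_singleton v)) hY hYint hp hoverlap).symm

end

theorem ate_identification_gps_general {Ω E : Type*} [mΩ : MeasurableSpace Ω]
    [StandardBorelSpace Ω] [MeasurableSpace E]
    (μ : Measure Ω) [IsProbabilityMeasure μ] (T : ℕ)
    (W : Ω → Fin T) (X : Ω → E) (Y : Fin T → Ω → ℝ)
    (hW : Measurable W) (hY : ∀ w, Measurable (Y w))
    (hYint : ∀ w, Integrable (Y w) μ)
    (p : Fin T → Ω → ℝ)
    (hp : ∀ w, p w = μ[(fun ω => if W ω = w then (1 : ℝ) else 0) |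
        MeasurableSpace.comap X inferInstance])
    (hoverlap : ∀ w, ∀ᵐ ω ∂μ, 0 < p w ω)
    (hmX : MeasurableSpace.comap X inferInstance ≤ mΩ)
    (hweak : ∀ w : Fin T, CondIndepFun (MeasurableSpace.comap X inferInstance) hmX
        (fun ω => if W ω = w then (1 : ℝ) else 0) (Y w) μ)
    (w w' : Fin T) :
    ∫ ω, (Y w' ω - Y w ω) ∂μ
      = (∫ ω,
          ((μ[(fun ω' => (if W ω' = w' then (1 : ℝ) else 0) * Y (W ω') ω') |
              MeasurableSpace.comap (p w') inferInstance]) ω)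
          / ((μ[(fun ω' => if W ω' = w' then (1 : ℝ) else 0) |
              MeasurableSpace.comap (p w') inferInstance]) ω) ∂μ)
        - ∫ ω,
          ((μ[(fun ω' => (if W ω' = w then (1 : ℝ) else 0) * Y (W ω') ω') |
              MeasurableSpace.comap (p w) inferInstance]) ω)
          / ((μ[(fun ω' => if W ω' = w then (1 : ℝ) else 0) |
              MeasurableSpace.comap (p w) inferInstance]) ω) ∂μ := by
  rw [integral_sub (hYint w') (hYint w),
    integral_eq_integral_condExp_obs_given_gps hW (hY w') (hYint w') (hp w') (hoverlap w')
      (hweak w'),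
    integral_eq_integral_condExp_obs_given_gps hW (hY w) (hYint w) (hp w) (hoverlap w) (hweak w)]

/-- Under weak unconfoundedness and overlap, the average treatment effect
`τ(w,w') = E[Y(w') - Y(w)]` equals
`E[ E[Y^obs | W = w', p(w'|X)] ] - E[ E[Y^obs | W = w, p(w|X)] ]`, where the inner
conditional expectations given the event `W = v` and the score `p(v|X)` are the ratios
`E[1{W=v}·Y^obs | p(v|X)] / E[1{W=v} | p(v|X)]`. -/
theorem ate_identification_gps {Ω E : Type*} [mΩ : MeasurableSpace Ω]
    [StandardBorelSpace Ω] [MeasurableSpace E]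
    (μ : Measure Ω) [IsProbabilityMeasure μ] (T : ℕ)
    (W : Ω → Fin T) (X : Ω → E) (Y : Fin T → Ω → ℝ)
    (hW : Measurable W) (hX : Measurable X) (hY : ∀ w, Measurable (Y w))
    (hYint : ∀ w, Integrable (Y w) μ)
    (p : Fin T → Ω → ℝ)
    (hp : ∀ w, p w = μ[(fun ω => if W ω = w then (1 : ℝ) else 0) |
        MeasurableSpace.comap X inferInstance])
    (hoverlap : ∀ w, ∀ᵐ ω ∂μ, 0 < p w ω)
    (hmX : MeasurableSpace.comap X inferInstance ≤ mΩ)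
    (hweak : ∀ w : Fin T, CondIndepFun (MeasurableSpace.comap X inferInstance) hmX
        (fun ω => if W ω = w then (1 : ℝ) else 0) (Y w) μ)
    (w w' : Fin T) :
    ∫ ω, (Y w' ω - Y w ω) ∂μ
      = (∫ ω,
          ((μ[(fun ω' => (if W ω' = w' then (1 : ℝ) else 0) * Y (W ω') ω') |
              MeasurableSpace.comap (p w') inferInstance]) ω)
          / ((μ[(fun ω' => if W ω' = w' then (1 : ℝ) else 0) |
              MeasurableSpace.comap (p w') inferInstance]) ω) ∂μ)
        - ∫ ω,
          ((μ[(fun ω' => (if W ω' = w then (1 : ℝ) else 0) * Y (W ω') ω') |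
              MeasurableSpace.comap (p w) inferInstance]) ω)
          / ((μ[(fun ω' => if W ω' = w then (1 : ℝ) else 0) |
              MeasurableSpace.comap (p w) inferInstance]) ω) ∂μ :=
  ate_identification_gps_general (mΩ := mΩ) μ T W X Y hW hY hYint p hp hoverlap hmX hweak w w'
end

section
/- Under weak unconfoundedness and overlap, E[Y(w)] admits the inverse-probability-weighting representation E[Y(w)] = E[ 1{W = w} · Y^obs / p(w|X) ]. -/
/-!
Condition on `σ(X)`. Weak unconfoundedness says that `1{W = w}` and `Y(w)` are conditionally
independent given `X`, so `E[1{W = w} Y(w) | X] = p(w|X) E[Y(w) | X]`; since `p(w|X) > 0` is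
`σ(X)`-measurable, dividing by it and taking expectations gives `E[Y(w)]`. The same identity for
`|Y(w)|`, read through Lebesgue integrals, shows that the weighted integrand is integrable.
-/

open MeasureTheory ProbabilityTheory

section

variable {Ω : Type*} {m mΩ : MeasurableSpace Ω} {μ : Measure Ω}

-- Conditional independence is independence under `condExpKernel μ m ω` for almost every `ω`.
theorem ProbabilityTheory.CondIndepFun.condExp_mul_ae_eq_mul_condExp [StandardBorelSpace Ω]
    [IsFiniteMeasure μ] {hm : m ≤ mΩ} {f g : Ω → ℝ} (hfg : CondIndepFun m hm f g μ)
    (hf : Measurable f) (hg : Measurable g) (hfg_int : Integrable (f * g) μ)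
    (hf_int : Integrable f μ) (hg_int : Integrable g μ) :
    μ[f * g | m] =ᵐ[μ] μ[f | m] * μ[g | m] := by
  have h_indep : ∀ᵐ ω ∂μ, f ⟂ᵢ[condExpKernel μ m ω] g := by
    refine ae_of_ae_trim hm ?_
    filter_upwards [(condIndepFun_iff_map_prod_eq_prod_map_map hf hg).mp hfg] with ω hω
    rw [indepFun_iff_map_prod_eq_prod_map_map hf.aemeasurable hg.aemeasurable]
    simpa [Kernel.map_apply _ (hf.prodMk hg), Kernel.prod_apply, Kernel.map_apply _ hf,
      Kernel.map_apply _ hg] using hω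
  filter_upwards [condExp_ae_eq_integral_condExpKernel hm hfg_int,
    condExp_ae_eq_integral_condExpKernel hm hf_int,
    condExp_ae_eq_integral_condExpKernel hm hg_int, h_indep] with ω hfg' hf' hg' hω
  rw [hfg', Pi.mul_apply, hf', hg']
  exact hω.integral_mul_eq_mul_integral hf.aestronglyMeasurable hg.aestronglyMeasurable

namespace MeasureTheory

theorem lintegral_mul_condLExp (hm : m ≤ mΩ) [SigmaFinite (μ.trim hm)] {g F : Ω → ENNReal}
    (hg : Measurable[m] g) (hF : AEMeasurable F μ) :
    ∫⁻ ω, g ω * F ω ∂μ = ∫⁻ ω, g ω * μ⁻[F | m] ω ∂μ := by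
  have h_trim : (μ.withDensity F).trim hm = (μ.withDensity (μ⁻[F | m])).trim hm := by
    refine @Measure.ext _ m _ _ fun s hs ↦ ?_
    rw [trim_measurableSet_eq hm hs, trim_measurableSet_eq hm hs, withDensity_apply _ (hm s hs),
      withDensity_apply _ (hm s hs), setLIntegral_condLExp hm _ _ hs]
  calc ∫⁻ ω, g ω * F ω ∂μ = ∫⁻ ω, g ω ∂((μ.withDensity F).trim hm) := by
        rw [lintegral_trim hm hg, lintegral_withDensity_eq_lintegral_mul₀ hF
          (hg.mono hm le_rfl).aemeasurable]
        simp only [Pi.mul_apply, mul_comm]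
    _ = ∫⁻ ω, g ω * μ⁻[F | m] ω ∂μ := by
        rw [h_trim, lintegral_trim hm hg, lintegral_withDensity_eq_lintegral_mul _
          (measurable_condLExp' m μ F) (hg.mono hm le_rfl)]
        simp only [Pi.mul_apply, mul_comm]

theorem integrable_mul_of_integrable_mul_condExp_abs (hm : m ≤ mΩ) [SigmaFinite (μ.trim hm)]
    {h f : Ω → ℝ} (hh : StronglyMeasurable[m] h) (hf : Integrable f μ)
    (h_int : Integrable (fun ω ↦ h ω * μ[fun ω ↦ |f ω| | m] ω) μ) :
    Integrable (fun ω ↦ h ω * f ω) μ := by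
  refine ⟨(hh.mono hm).aestronglyMeasurable.mul hf.aestronglyMeasurable, ?_⟩
  have h_abs : μ⁻[fun ω ↦ ‖|f ω|‖ₑ | m] =ᵐ[μ] fun ω ↦ ‖μ[fun ω ↦ |f ω| | m] ω‖ₑ :=
    condLExp_enorm m hf.abs (ae_of_all _ fun ω ↦ abs_nonneg (f ω))
  calc ∫⁻ ω, ‖h ω * f ω‖ₑ ∂μ = ∫⁻ ω, ‖h ω‖ₑ * ‖|f ω|‖ₑ ∂μ := by
        simp only [enorm_mul, Real.enorm_abs]
    _ = ∫⁻ ω, ‖h ω‖ₑ * μ⁻[fun ω ↦ ‖|f ω|‖ₑ | m] ω ∂μ :=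
        lintegral_mul_condLExp hm (measurable_enorm.comp hh.measurable)
          hf.1.aemeasurable.abs.enorm
    _ = ∫⁻ ω, ‖h ω * μ[fun ω ↦ |f ω| | m] ω‖ₑ ∂μ := by
        refine lintegral_congr_ae ?_
        filter_upwards [h_abs] with ω hω
        rw [hω, enorm_mul]
    _ < ⊤ := h_int.2

theorem integral_div_eq_of_condExp_eq_mul (hm : m ≤ mΩ) [SigmaFinite (μ.trim hm)]
    {q f g : Ω → ℝ} (hq : StronglyMeasurable[m] q) (hq_pos : ∀ᵐ ω ∂μ, 0 < q ω)
    (hf : Integrable f μ) (hfg : μ[f | m] =ᵐ[μ] q * μ[g | m])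
    (hfg_abs : μ[fun ω ↦ |f ω| | m] =ᵐ[μ] q * μ[fun ω ↦ |g ω| | m]) :
    ∫ ω, f ω / q ω ∂μ = ∫ ω, g ω ∂μ := by
  have hq_inv : StronglyMeasurable[m] q⁻¹ := hq.measurable.inv.stronglyMeasurable
  have hq_cancel : ∀ {u v : Ω → ℝ}, u =ᵐ[μ] q * v → q⁻¹ * u =ᵐ[μ] v := fun huv ↦ by
    filter_upwards [huv, hq_pos] with ω hω hω_pos
    simp [hω, hω_pos.ne']
  have hf_div : Integrable (q⁻¹ * f) μ :=
    integrable_mul_of_integrable_mul_condExp_abs hm hq_inv hf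
      (integrable_condExp.congr (hq_cancel hfg_abs).symm)
  calc ∫ ω, f ω / q ω ∂μ = ∫ ω, μ[q⁻¹ * f | m] ω ∂μ := by
        rw [integral_condExp hm]
        simp only [Pi.mul_apply, Pi.inv_apply, div_eq_inv_mul]
    _ = ∫ ω, μ[g | m] ω ∂μ :=
        integral_congr_ae ((condExp_mul_of_stronglyMeasurable_left hq_inv hf_div hf).trans
          (hq_cancel hfg))
    _ = ∫ ω, g ω ∂μ := integral_condExp hm

end MeasureTheory

end

theorem ipw_identification_general {Ω E : Type*} [mΩ : MeasurableSpace Ω]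
    [StandardBorelSpace Ω] [MeasurableSpace E]
    (μ : Measure Ω) [IsProbabilityMeasure μ] (T : ℕ)
    (W : Ω → Fin T) (X : Ω → E) (Y : Fin T → Ω → ℝ)
    (hW : Measurable W) (hY : ∀ w, Measurable (Y w))
    (hYint : ∀ w, Integrable (Y w) μ)
    (p : Fin T → Ω → ℝ)
    (hp : ∀ w, p w = μ[(fun ω => if W ω = w then (1 : ℝ) else 0) |
        MeasurableSpace.comap X inferInstance])
    (hoverlap : ∀ w, ∀ᵐ ω ∂μ, 0 < p w ω)
    (hmX : MeasurableSpace.comap X inferInstance ≤ mΩ)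
    (hweak : ∀ w : Fin T, CondIndepFun (MeasurableSpace.comap X inferInstance) hmX
        (fun ω => if W ω = w then (1 : ℝ) else 0) (Y w) μ)
    (w : Fin T) :
    ∫ ω, Y w ω ∂μ
      = ∫ ω, (if W ω = w then (1 : ℝ) else 0) * Y (W ω) ω / p w ω ∂μ := by
  set I : Ω → ℝ := fun ω => if W ω = w then 1 else 0
  have hI : Measurable I :=
    Measurable.ite (hW (measurableSet_singleton w)) measurable_const measurable_const
  have hI_le : ∀ᵐ ω ∂μ, ‖I ω‖ ≤ 1 := ae_of_all _ fun ω ↦ by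
    by_cases h : W ω = w <;> simp [I, h]
  have hI_mul : ∀ {g : Ω → ℝ}, Integrable g μ → Integrable (I * g) μ := fun hg ↦
    hg.bdd_mul hI.aestronglyMeasurable hI_le
  have h_factor : ∀ {g : Ω → ℝ}, Measurable g → Integrable g μ →
      CondIndepFun (MeasurableSpace.comap X inferInstance) hmX I g μ →
      μ[I * g | MeasurableSpace.comap X inferInstance] =ᵐ[μ]
        p w * μ[g | MeasurableSpace.comap X inferInstance] := fun hg hg_int h_indep ↦ by
    rw [hp w]
    exact h_indep.condExp_mul_ae_eq_mul_condExp hI hg (hI_mul hg_int)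
      (.of_bound hI.aestronglyMeasurable 1 hI_le) hg_int
  have h_obs : ∀ ω, (if W ω = w then (1 : ℝ) else 0) * Y (W ω) ω = (I * Y w) ω := fun ω ↦ by
    by_cases h : W ω = w <;> simp [I, h]
  have h_abs : (fun ω ↦ |(I * Y w) ω|) = I * fun ω ↦ |Y w ω| := by
    funext ω; by_cases h : W ω = w <;> simp [I, h]
  simp_rw [h_obs]
  refine (integral_div_eq_of_condExp_eq_mul hmX ?_ (hoverlap w) (hI_mul (hYint w))
    (h_factor (hY w) (hYint w) (hweak w)) ?_).symm
  · rw [hp w]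
    exact stronglyMeasurable_condExp
  · rw [h_abs]
    exact h_factor (hY w).abs (hYint w).abs ((hweak w).comp measurable_id measurable_abs)

/-- Under weak unconfoundedness and overlap, the inverse-probability-weighting
representation holds: `E[Y(w)] = E[ 1{W = w} · Y^obs / p(w|X) ]`. -/
theorem ipw_identification {Ω E : Type*} [mΩ : MeasurableSpace Ω]
    [StandardBorelSpace Ω] [MeasurableSpace E]
    (μ : Measure Ω) [IsProbabilityMeasure μ] (T : ℕ)
    (W : Ω → Fin T) (X : Ω → E) (Y : Fin T → Ω → ℝ)
    (hW : Measurable W) (hX : Measurable X) (hY : ∀ w, Measurable (Y w))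
    (hYint : ∀ w, Integrable (Y w) μ)
    (p : Fin T → Ω → ℝ)
    (hp : ∀ w, p w = μ[(fun ω => if W ω = w then (1 : ℝ) else 0) |
        MeasurableSpace.comap X inferInstance])
    (hoverlap : ∀ w, ∀ᵐ ω ∂μ, 0 < p w ω)
    (hmX : MeasurableSpace.comap X inferInstance ≤ mΩ)
    (hweak : ∀ w : Fin T, CondIndepFun (MeasurableSpace.comap X inferInstance) hmX
        (fun ω => if W ω = w then (1 : ℝ) else 0) (Y w) μ)
    (w : Fin T) :
    ∫ ω, Y w ω ∂μ
      = ∫ ω, (if W ω = w then (1 : ℝ) else 0) * Y (W ω) ω / p w ω ∂μ :=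
  ipw_identification_general (mΩ := mΩ) μ T W X Y hW hY hYint p hp hoverlap hmX hweak w
end

section
/- Pairwise comparison estimands need not be transitive: there exists a probability space with treatment W ∈ {1,2,3} and potential outcomes Y(1), Y(2), Y(3) such that E[Y(2)−Y(1) | W ∈ {1,2}] + E[Y(3)−Y(2) | W ∈ {2,3}] + E[Y(1)−Y(3) | W ∈ {1,3}] ≠ 0, while the unconditional effects always satisfy τ(1,2) + τ(2,3) + τ(3,1) = 0. -/
/-!
The unconditional effects telescope by linearity of the integral. The pairwise estimands do not,
because each of them averages over its own subpopulation `{W ∈ {w, w'}}`. If only the units with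
`W = 0` respond, and only to treatment `1`, then `E[Y(1) - Y(0) | W ∈ {0, 1}] = P(W = 0 | W ∈ {0, 1})`
is positive, while the other two estimands vanish: `{W ∈ {1, 2}}` contains no responding unit and
`Y(0) = Y(2)`. A uniformly distributed `W` on three points realizes this.
-/

open MeasureTheory ProbabilityTheory

theorem integral_sub_cyclic_sum_eq_zero {Ω : Type*} [MeasurableSpace Ω] {μ : Measure Ω}
    {f g h : Ω → ℝ} (hf : Integrable f μ) (hg : Integrable g μ) (hh : Integrable h μ) :
    ∫ ω, (g ω - f ω) ∂μ + ∫ ω, (h ω - g ω) ∂μ + ∫ ω, (f ω - h ω) ∂μ = 0 := by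
  rw [integral_sub hg hf, integral_sub hh hg, integral_sub hf hh]
  ring

lemma uniformOn_univ_pos {Ω : Type*} [MeasurableSpace Ω] [MeasurableSingletonClass Ω] [Finite Ω]
    {t : Set Ω} (ht : t.Nonempty) : 0 < uniformOn Set.univ t := by
  rw [pos_iff_ne_zero, Ne, uniformOn_eq_zero_iff Set.finite_univ, Set.univ_inter]
  exact ht.ne_empty

section PairwiseEstimands

variable {Ω : Type*} [MeasurableSpace Ω]

noncomputable def pairwiseCyclicSum (μ : Measure Ω) (W : Ω → Fin 3) (Y : Fin 3 → Ω → ℝ) : ℝ :=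
  ∫ ω, (Y 1 ω - Y 0 ω) ∂(μ[|{ω | W ω = 0 ∨ W ω = 1}])
    + ∫ ω, (Y 2 ω - Y 1 ω) ∂(μ[|{ω | W ω = 1 ∨ W ω = 2}])
    + ∫ ω, (Y 0 ω - Y 2 ω) ∂(μ[|{ω | W ω = 0 ∨ W ω = 2}])

noncomputable def selectiveResponse (W : Ω → Fin 3) (w : Fin 3) : Ω → ℝ :=
  if w = 1 then {ω | W ω = 0}.indicator 1 else 0

variable {μ : Measure Ω} {W : Ω → Fin 3}

lemma integrable_selectiveResponse [IsFiniteMeasure μ] (hW : Measurable W) (w : Fin 3) :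
    Integrable (selectiveResponse W w) μ := by
  unfold selectiveResponse
  split_ifs
  · exact (integrable_const 1).indicator (hW (measurableSet_singleton 0))
  · exact integrable_zero _ _ μ

lemma pairwiseCyclicSum_selectiveResponse (hW : Measurable W) :
    pairwiseCyclicSum μ W (selectiveResponse W)
      = (μ[|{ω | W ω = 0 ∨ W ω = 1}]).real {ω | W ω = 0} := by
  have hW0 : MeasurableSet {ω | W ω = 0} := hW (measurableSet_singleton 0)
  have hdisj : {ω | W ω = 1 ∨ W ω = 2} ∩ {ω | W ω = 0} = ∅ := by
    ext ω
    simp only [Set.mem_inter_iff, Set.mem_ofPred_eq, Set.mem_empty_iff_false, iff_false]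
    grind
  have hnull : (μ[|{ω | W ω = 1 ∨ W ω = 2}]) {ω | W ω = 0} = 0 := by
    rw [cond_apply' hW0, hdisj, measure_empty, mul_zero]
  simp [pairwiseCyclicSum, selectiveResponse, integral_indicator_one hW0, integral_neg,
    measureReal_def, hnull]

lemma pairwiseCyclicSum_selectiveResponse_pos [IsFiniteMeasure μ] (hW : Measurable W)
    (hμW0 : μ {ω | W ω = 0} ≠ 0) :
    0 < pairwiseCyclicSum μ W (selectiveResponse W) := by
  have hpair : MeasurableSet {ω | W ω = 0 ∨ W ω = 1} :=
    (hW (measurableSet_singleton 0)).union (hW (measurableSet_singleton 1))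
  have hinter : {ω | W ω = 0 ∨ W ω = 1} ∩ {ω | W ω = 0} = {ω | W ω = 0} :=
    Set.inter_eq_right.mpr fun _ => Or.inl
  rw [pairwiseCyclicSum_selectiveResponse hW]
  refine ENNReal.toReal_pos (cond_pos_of_inter_ne_zero hpair ?_).ne' (measure_ne_top _ _)
  rwa [hinter]

end PairwiseEstimands

/-- Pairwise comparison estimands need not be transitive: there is a
probability space with `W ∈ {1,2,3}` (here `Fin 3`) and potential outcomes such that the
cyclic sum of pairwise-restricted estimands `E[Y(w')-Y(w) | W ∈ {w,w'}]` is nonzero,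
whereas the cyclic sum of the unconditional effects `τ(w,w') = E[Y(w')-Y(w)]` is always
zero. -/
theorem pairwise_estimands_not_transitive :
    (∃ (Ω : Type) (_ : MeasurableSpace Ω) (μ : Measure Ω) (_ : IsProbabilityMeasure μ)
        (W : Ω → Fin 3) (Y : Fin 3 → Ω → ℝ),
      Measurable W ∧ (∀ w, Integrable (Y w) μ) ∧
      (∀ w w' : Fin 3, w ≠ w' → 0 < μ {ω | W ω = w ∨ W ω = w'}) ∧
      (∫ ω, (Y 1 ω - Y 0 ω) ∂(μ[|{ω | W ω = 0 ∨ W ω = 1}])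
        + ∫ ω, (Y 2 ω - Y 1 ω) ∂(μ[|{ω | W ω = 1 ∨ W ω = 2}])
        + ∫ ω, (Y 0 ω - Y 2 ω) ∂(μ[|{ω | W ω = 0 ∨ W ω = 2}]) ≠ 0))
    ∧ (∀ (Ω : Type) (_ : MeasurableSpace Ω) (μ : Measure Ω), IsProbabilityMeasure μ →
        ∀ Y : Fin 3 → Ω → ℝ, (∀ w, Integrable (Y w) μ) →
        ∫ ω, (Y 1 ω - Y 0 ω) ∂μ + ∫ ω, (Y 2 ω - Y 1 ω) ∂μ
          + ∫ ω, (Y 0 ω - Y 2 ω) ∂μ = 0) := by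
  refine ⟨⟨Fin 3, inferInstance, uniformOn Set.univ, inferInstance, id, selectiveResponse id,
    measurable_id, integrable_selectiveResponse measurable_id,
    fun w w' _ => uniformOn_univ_pos ⟨w, Or.inl rfl⟩, ?_⟩,
    fun Ω _ μ _ Y hY => integral_sub_cyclic_sum_eq_zero (hY 0) (hY 1) (hY 2)⟩
  have hμ0 : uniformOn Set.univ {ω : Fin 3 | id ω = 0} ≠ 0 :=
    (uniformOn_univ_pos (t := {ω | id ω = 0}) ⟨0, rfl⟩).ne'
  exact (pairwiseCyclicSum_selectiveResponse_pos measurable_id hμ0).ne'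
end

section
/- If 1{W = w} ⟂⟂ Y(w) | X for each w, and b_w(X) is any function of X such that P(W = w | X) = P(W = w | b_w(X)) almost surely (i.e., b_w is a balancing score for level w), then 1{W = w} ⟂⟂ Y(w) | b_w(X). -/
/-!
Since `σ(b_w(X)) ≤ σ(X)`, the tower property gives
`P(W = w, Y(w) ∈ B | b_w(X)) = E[P(W = w | X) · P(Y(w) ∈ B | X) | b_w(X)]`.
The balancing property makes the first factor `σ(b_w(X))`-measurable, so it can be pulled out,
and the tower property once more turns the remaining factor into `P(Y(w) ∈ B | b_w(X))`.
-/

open MeasureTheory ProbabilityTheory Filter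

section CondProb

variable {Ω : Type*} {m m₁ m₂ : MeasurableSpace Ω} [mΩ : MeasurableSpace Ω] {μ : Measure Ω}

lemma condProb_compl_ae_eq [IsFiniteMeasure μ] (hm : m ≤ mΩ) {s : Set Ω} (hs : MeasurableSet s) :
    μ⟦sᶜ | m⟧ =ᵐ[μ] 1 - μ⟦s | m⟧ := by
  rw [Set.indicator_compl]
  refine (condExp_sub (integrable_const 1) ((integrable_const 1).indicator hs) m).trans ?_
  rw [condExp_const hm]
  rfl

lemma norm_condProb_le_one (s : Set Ω) : ∀ᵐ ω ∂μ, ‖(μ⟦s | m⟧) ω‖ ≤ 1 := by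
  simp_rw [Real.norm_eq_abs]
  refine ae_bdd_abs_condExp_of_ae_bdd_abs (.of_forall fun ω => ?_)
  by_cases hω : ω ∈ s <;> simp [hω]

-- The preimages of an indicator are `univ`, `A`, `Aᶜ` and `∅`.
lemma condProb_indicator_preimage_ae_eq {β : Type*} [Zero β] [IsFiniteMeasure μ]
    (hm₁ : m₁ ≤ mΩ) (hm₂ : m₂ ≤ mΩ) {A : Set Ω} (hA : MeasurableSet A)
    (hA₁₂ : μ⟦A | m₂⟧ =ᵐ[μ] μ⟦A | m₁⟧) (c : β) (B : Set β) :
    μ⟦A.indicator (fun _ => c) ⁻¹' B | m₂⟧ =ᵐ[μ] μ⟦A.indicator (fun _ => c) ⁻¹' B | m₁⟧ := by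
  obtain h | h | h | h := Set.indicator_const_preimage A B c <;> rw [h]
  · simp only [Set.indicator_univ]
    rw [condExp_const hm₂, condExp_const hm₁]
  · exact hA₁₂
  · exact (condProb_compl_ae_eq hm₂ hA).trans
      ((EventuallyEq.rfl.sub hA₁₂).trans (condProb_compl_ae_eq hm₁ hA).symm)
  · simp

variable [StandardBorelSpace Ω] [IsFiniteMeasure μ]

theorem condIndepSet_of_le_of_condProb_ae_eq (h₁₂ : m₁ ≤ m₂) (h₂ : m₂ ≤ mΩ)
    {s t : Set Ω} (hs : MeasurableSet s) (ht : MeasurableSet t)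
    (hs₁₂ : μ⟦s | m₂⟧ =ᵐ[μ] μ⟦s | m₁⟧) (hst : CondIndepSet m₂ h₂ s t μ) :
    CondIndepSet m₁ (h₁₂.trans h₂) s t μ := by
  rw [condIndepSet_iff _ _ _ _ hs ht] at hst ⊢
  calc μ⟦s ∩ t | m₁⟧
      =ᵐ[μ] μ[μ⟦s ∩ t | m₂⟧ | m₁] := (condExp_condExp_of_le h₁₂ h₂).symm
    _ =ᵐ[μ] μ[μ⟦s | m₁⟧ * μ⟦t | m₂⟧ | m₁] :=
        condExp_congr_ae (hst.trans (hs₁₂.mul .rfl))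
    _ =ᵐ[μ] μ⟦s | m₁⟧ * μ[μ⟦t | m₂⟧ | m₁] :=
        condExp_stronglyMeasurable_mul_of_bound (h₁₂.trans h₂) stronglyMeasurable_condExp
          integrable_condExp 1 (norm_condProb_le_one s)
    _ =ᵐ[μ] μ⟦s | m₁⟧ * μ⟦t | m₁⟧ := EventuallyEq.rfl.mul (condExp_condExp_of_le h₁₂ h₂)

theorem condIndepFun_of_le_of_condProb_ae_eq {β β' : Type*} [MeasurableSpace β]
    [MeasurableSpace β'] {f : Ω → β} {g : Ω → β'} (hf : Measurable f) (hg : Measurable g)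
    (h₁₂ : m₁ ≤ m₂) (h₂ : m₂ ≤ mΩ)
    (hf₁₂ : ∀ s, MeasurableSet s → μ⟦f ⁻¹' s | m₂⟧ =ᵐ[μ] μ⟦f ⁻¹' s | m₁⟧)
    (hfg : CondIndepFun m₂ h₂ f g μ) : CondIndepFun m₁ (h₁₂.trans h₂) f g μ := by
  rw [condIndepFun_iff_condIndepSet_preimage hf hg] at hfg ⊢
  exact fun s t hs ht =>
    condIndepSet_of_le_of_condProb_ae_eq h₁₂ h₂ (hf hs) (hg ht) (hf₁₂ s hs) (hfg s t hs ht)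

end CondProb

theorem balancing_score_weak_unconf_general {Ω E F : Type*} [mΩ : MeasurableSpace Ω]
    [StandardBorelSpace Ω] [MeasurableSpace E] [MeasurableSpace F]
    (μ : Measure Ω) [IsProbabilityMeasure μ] (T : ℕ)
    (W : Ω → Fin T) (X : Ω → E) (Y : Fin T → Ω → ℝ)
    (hW : Measurable W) (hY : ∀ w, Measurable (Y w))
    (b : Fin T → E → F) (hb : ∀ w, Measurable (b w))
    (hmX : MeasurableSpace.comap X inferInstance ≤ mΩ)
    (hmb : ∀ w : Fin T,
      MeasurableSpace.comap (fun ω => b w (X ω)) inferInstance ≤ mΩ)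
    (hbal : ∀ w : Fin T,
      μ[(fun ω => if W ω = w then (1 : ℝ) else 0) | MeasurableSpace.comap X inferInstance]
        =ᵐ[μ] μ[(fun ω => if W ω = w then (1 : ℝ) else 0) |
            MeasurableSpace.comap (fun ω => b w (X ω)) inferInstance])
    (hweak : ∀ w : Fin T, CondIndepFun (MeasurableSpace.comap X inferInstance) hmX
        (fun ω => if W ω = w then (1 : ℝ) else 0) (Y w) μ) :
    ∀ w : Fin T, CondIndepFun (MeasurableSpace.comap (fun ω => b w (X ω)) inferInstance) (hmb w)
        (fun ω => if W ω = w then (1 : ℝ) else 0) (Y w) μ := by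
  intro w
  have hA : MeasurableSet (W ⁻¹' {w}) := hW (measurableSet_singleton w)
  have h_ite : (fun ω => if W ω = w then (1 : ℝ) else 0) = (W ⁻¹' {w}).indicator fun _ => 1 := by
    ext ω
    simp [Set.indicator]
  have hbX : MeasurableSpace.comap (fun ω => b w (X ω)) inferInstance
      ≤ MeasurableSpace.comap X inferInstance :=
    ((hb w).comp (comap_measurable X)).comap_le
  have hbal_w := hbal w
  have hweak_w := hweak w
  rw [h_ite] at hbal_w hweak_w ⊢
  exact condIndepFun_of_le_of_condProb_ae_eq (measurable_const.indicator hA) (hY w) hbX hmX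
    (fun B _ => condProb_indicator_preimage_ae_eq (hmb w) hmX hA hbal_w 1 B) hweak_w

/-- If `1{W = w} ⟂⟂ Y(w) | X` and `b_w` is a balancing score for level `w`,
i.e. `P(W = w | X) = P(W = w | b_w(X))` a.s., then `1{W = w} ⟂⟂ Y(w) | b_w(X)`. -/
theorem balancing_score_weak_unconf {Ω E F : Type*} [mΩ : MeasurableSpace Ω]
    [StandardBorelSpace Ω] [MeasurableSpace E] [MeasurableSpace F]
    (μ : Measure Ω) [IsProbabilityMeasure μ] (T : ℕ)
    (W : Ω → Fin T) (X : Ω → E) (Y : Fin T → Ω → ℝ)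
    (hW : Measurable W) (hX : Measurable X) (hY : ∀ w, Measurable (Y w))
    (b : Fin T → E → F) (hb : ∀ w, Measurable (b w))
    (hmX : MeasurableSpace.comap X inferInstance ≤ mΩ)
    (hmb : ∀ w : Fin T,
      MeasurableSpace.comap (fun ω => b w (X ω)) inferInstance ≤ mΩ)
    (hbal : ∀ w : Fin T,
      μ[(fun ω => if W ω = w then (1 : ℝ) else 0) | MeasurableSpace.comap X inferInstance]
        =ᵐ[μ] μ[(fun ω => if W ω = w then (1 : ℝ) else 0) |
            MeasurableSpace.comap (fun ω => b w (X ω)) inferInstance])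
    (hweak : ∀ w : Fin T, CondIndepFun (MeasurableSpace.comap X inferInstance) hmX
        (fun ω => if W ω = w then (1 : ℝ) else 0) (Y w) μ) :
    ∀ w : Fin T, CondIndepFun (MeasurableSpace.comap (fun ω => b w (X ω)) inferInstance) (hmb w)
        (fun ω => if W ω = w then (1 : ℝ) else 0) (Y w) μ :=
  balancing_score_weak_unconf_general (mΩ := mΩ) μ T W X Y hW hY b hb hmX hmb hbal hweak
end

section
/- Under strong unconfoundedness and overlap, the conditional average treatment effect is identified given the full propensity score vector: E[Y(w') − Y(w) | p(1|X),...,p(T−1|X)] = E[Y^obs | W = w', p(1|X),...,p(T−1|X)] − E[Y^obs | W = w, p(1|X),...,p(T−1|X)] almost surely. -/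
/-!
Strong unconfoundedness makes `1{W = v}` and `Y v` independent under the regular conditional
law given `X`, so `E[1{W = v} Y v | X] = p(v|X) E[Y v | X]`. Since the scores sum to one, every
`p(v|X)`, including the omitted last one, is a function of the score vector `S`; as `σ(S) ⊆ σ(X)`,
the tower property and pulling out `p(v|X)` give `E[1{W = v} Y^obs | S] = p(v|X) E[Y v | S]` and
`E[1{W = v} | S] = p(v|X)`, and overlap lets us divide.
-/

open MeasureTheory ProbabilityTheory Set

section

variable {Ω : Type*} [MeasurableSpace Ω]

lemma map_restrict_eq_smul_map_of_Iic_rat {ν : Measure Ω} [IsProbabilityMeasure ν]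
    {A : Set Ω} {g : Ω → ℝ} (hg : Measurable g)
    (h : ∀ q : ℚ, ν (A ∩ g ⁻¹' Iic (q : ℝ)) = ν A * ν (g ⁻¹' Iic (q : ℝ))) :
    (ν.restrict A).map g = ν A • ν.map g := by
  refine ext_of_generate_finite _
    ((BorelSpace.measurable_eq (α := ℝ)).trans Real.borel_eq_generateFrom_Iic_rat)
    Real.isPiSystem_Iic_rat ?_ ?_
  · simp only [mem_iUnion, mem_singleton_iff]
    rintro _ ⟨q, rfl⟩
    rw [Measure.map_apply hg measurableSet_Iic, Measure.restrict_apply (hg measurableSet_Iic),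
      Measure.smul_apply, Measure.map_apply hg measurableSet_Iic, smul_eq_mul, inter_comm]
    exact h q
  · simp [Measure.map_apply hg MeasurableSet.univ]

lemma integral_indicator_eq_measureReal_mul_of_Iic_rat {ν : Measure Ω} [IsProbabilityMeasure ν]
    {A : Set Ω} (hA : MeasurableSet A) {g : Ω → ℝ} (hg : Measurable g)
    (h : ∀ q : ℚ, ν (A ∩ g ⁻¹' Iic (q : ℝ)) = ν A * ν (g ⁻¹' Iic (q : ℝ))) :
    ∫ x, A.indicator g x ∂ν = ν.real A * ∫ x, g x ∂ν := by
  have hmap : ∀ ν' : Measure Ω, ∫ y, y ∂ν'.map g = ∫ x, g x ∂ν' := fun ν' =>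
    integral_map hg.aemeasurable aestronglyMeasurable_id
  rw [integral_indicator hA, ← hmap, map_restrict_eq_smul_map_of_Iic_rat hg h,
    integral_smul_measure, hmap, measureReal_def, smul_eq_mul]

end

theorem ProbabilityTheory.CondIndepFun.condExp_indicator_preimage_ae_eq_mul
    {Ω β : Type*} {m mΩ : MeasurableSpace Ω} [StandardBorelSpace Ω] {hm : m ≤ mΩ}
    {μ : Measure Ω} [IsFiniteMeasure μ] [MeasurableSpace β] {f : Ω → β} {g : Ω → ℝ}
    (hfg : CondIndepFun m hm f g μ) (hf : Measurable f) (hg : Measurable g)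
    (hgi : Integrable g μ) {s : Set β} (hs : MeasurableSet s) :
    μ[(f ⁻¹' s).indicator g | m] =ᵐ[μ] μ⟦f ⁻¹' s | m⟧ * μ[g | m] := by
  -- countably many test sets `g ≤ q`, so the conditional independence holds for a.e. `ω` at once
  have hIic : ∀ᵐ ω ∂μ, ∀ q : ℚ, condExpKernel μ m ω (f ⁻¹' s ∩ g ⁻¹' Iic (q : ℝ))
      = condExpKernel μ m ω (f ⁻¹' s) * condExpKernel μ m ω (g ⁻¹' Iic (q : ℝ)) :=
    ae_all_iff.2 fun q => ae_of_ae_trim hm <|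
      Kernel.IndepFun.measure_inter_preimage_eq_mul hfg _ _ hs measurableSet_Iic
  filter_upwards [condExp_ae_eq_integral_condExpKernel hm (hgi.indicator (hf hs)),
    condExp_ae_eq_integral_condExpKernel hm hgi, condExpKernel_ae_eq_condExp hm (hf hs), hIic]
    with ω hprod hg' hs' hω
  rw [hprod, integral_indicator_eq_measureReal_mul_of_Iic_rat (hf hs) hg hω, Pi.mul_apply, hs', hg']

section

variable {Ω : Type*} {m' m mΩ : MeasurableSpace Ω} {μ : Measure Ω} [IsFiniteMeasure μ]

lemma condExp_indicator_div_condExp_ae_eq_of_ae_eq_mul (hm' : m' ≤ m) (hm : m ≤ mΩ)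
    {A : Set Ω} {g : Ω → ℝ}
    (hfac : μ[A.indicator g | m] =ᵐ[μ] μ⟦A | m⟧ * μ[g | m])
    (hmeas : AEStronglyMeasurable[m'] (μ⟦A | m⟧) μ) (hpos : ∀ᵐ ω ∂μ, 0 < (μ⟦A | m⟧) ω) :
    (fun ω => μ[A.indicator g | m'] ω / (μ⟦A | m'⟧) ω) =ᵐ[μ] μ[g | m'] := by
  have hm'Ω := hm'.trans hm
  have hbound : ∀ᵐ ω ∂μ, ‖(μ⟦A | m⟧) ω‖ ≤ 1 := by
    simpa using ae_bdd_abs_condExp_of_ae_bdd_abs (m := m) (μ := μ) (R := (1 : ℝ))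
      (.of_forall fun ω => by by_cases h : ω ∈ A <;> simp [h])
  have hden : μ⟦A | m'⟧ =ᵐ[μ] μ⟦A | m⟧ :=
    (condExp_condExp_of_le hm' hm).symm.trans (condExp_of_aestronglyMeasurable' hm'Ω hmeas
      integrable_condExp)
  have hnum : μ[A.indicator g | m'] =ᵐ[μ] μ⟦A | m⟧ * μ[g | m'] := calc
    μ[A.indicator g | m'] =ᵐ[μ] μ[μ[A.indicator g | m] | m'] :=
      (condExp_condExp_of_le hm' hm).symm
    _ =ᵐ[μ] μ[μ⟦A | m⟧ * μ[g | m] | m'] := condExp_congr_ae hfac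
    _ =ᵐ[μ] μ⟦A | m⟧ * μ[μ[g | m] | m'] :=
      condExp_stronglyMeasurable_mul_of_bound₀ hm'Ω hmeas integrable_condExp 1 hbound
    _ =ᵐ[μ] μ⟦A | m⟧ * μ[g | m'] := (condExp_condExp_of_le hm' hm).mul_left
  filter_upwards [hnum, hden, hpos] with ω hn hd hp
  rw [hn, hd, Pi.mul_apply, mul_div_cancel_left₀ _ hp.ne']

end

lemma sum_condExp_indicator_preimage_singleton_ae_eq_one {Ω ι : Type*} {m mΩ : MeasurableSpace Ω}
    {μ : Measure Ω} [IsFiniteMeasure μ] [Fintype ι] [MeasurableSpace ι] [MeasurableSingletonClass ι]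
    (hm : m ≤ mΩ) {f : Ω → ι} (hf : Measurable f) :
    ∑ i, μ⟦f ⁻¹' {i} | m⟧ =ᵐ[μ] 1 := by
  have hpartition : ∑ i, (f ⁻¹' {i}).indicator (fun _ => (1 : ℝ)) = 1 := by
    ext ω
    classical
    simp [Set.indicator_apply]
  refine (condExp_finsetSum (fun i _ => (integrable_const (1 : ℝ)).indicator
    (hf (.singleton i))) m).symm.trans ?_
  rw [hpartition]
  exact .of_eq (condExp_const (μ := μ) hm (1 : ℝ))

lemma aestronglyMeasurable_comap_init_of_sum_ae_eq_one {Ω : Type*} [MeasurableSpace Ω]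
    {μ : Measure Ω} {T : ℕ} {p : Fin (T + 1) → Ω → ℝ} (hsum : ∑ u, p u =ᵐ[μ] 1)
    (v : Fin (T + 1)) :
    AEStronglyMeasurable[MeasurableSpace.comap (fun ω (u : Fin T) => p u.castSucc ω) inferInstance]
      (p v) μ := by
  have hcoord : ∀ u : Fin T, Measurable[MeasurableSpace.comap
      (fun ω (u : Fin T) => p u.castSucc ω) inferInstance] (p u.castSucc) := fun u =>
    (measurable_pi_apply u).comp (comap_measurable (fun ω (u : Fin T) => p u.castSucc ω))
  induction v using Fin.lastCases with
  | cast u => exact (hcoord u).aestronglyMeasurable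
  | last =>
    refine ⟨fun ω => 1 - ∑ u : Fin T, p u.castSucc ω,
      (measurable_const.sub (Finset.measurable_sum _ fun u _ => hcoord u)).stronglyMeasurable, ?_⟩
    filter_upwards [hsum] with ω hω
    simp only [Finset.sum_apply, Fin.sum_univ_castSucc, Pi.one_apply] at hω
    linarith

lemma condExp_indicator_div_ae_eq_condExp_of_condIndepFun {Ω : Type*}
    {m mΩ : MeasurableSpace Ω} [StandardBorelSpace Ω] {hm : m ≤ mΩ} {μ : Measure Ω}
    [IsFiniteMeasure μ] {T : ℕ} {W : Ω → Fin (T + 1)} {g : Ω → ℝ} {p : Fin (T + 1) → Ω → ℝ}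
    (hW : Measurable W) (hg : Measurable g) (hgi : Integrable g μ)
    (hind : CondIndepFun m hm W g μ) (hp : ∀ w, p w = μ⟦W ⁻¹' {w} | m⟧) {v : Fin (T + 1)}
    (hoverlap : ∀ᵐ ω ∂μ, 0 < p v ω) :
    (fun ω => μ[(W ⁻¹' {v}).indicator g |
        MeasurableSpace.comap (fun ω (u : Fin T) => p u.castSucc ω) inferInstance] ω
      / (μ⟦W ⁻¹' {v} |
          MeasurableSpace.comap (fun ω (u : Fin T) => p u.castSucc ω) inferInstance⟧) ω)
      =ᵐ[μ] μ[g | MeasurableSpace.comap (fun ω (u : Fin T) => p u.castSucc ω) inferInstance] := by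
  have hscores_le : MeasurableSpace.comap (fun ω (u : Fin T) => p u.castSucc ω) inferInstance ≤ m :=
    ((@measurable_pi_iff _ _ _ m _ _).2 fun u => by
      rw [hp]; exact stronglyMeasurable_condExp.measurable).comap_le
  have hsum : ∑ u, p u =ᵐ[μ] 1 := by
    simpa only [hp] using sum_condExp_indicator_preimage_singleton_ae_eq_one (μ := μ) hm hW
  rw [hp] at hoverlap
  refine condExp_indicator_div_condExp_ae_eq_of_ae_eq_mul hscores_le hm
    (hind.condExp_indicator_preimage_ae_eq_mul hW hg hgi (.singleton v)) ?_ hoverlap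
  rw [← hp]
  exact aestronglyMeasurable_comap_init_of_sum_ae_eq_one hsum v

theorem cate_identified_by_ps_vector_general {Ω E : Type*} [mΩ : MeasurableSpace Ω]
    [StandardBorelSpace Ω] [MeasurableSpace E]
    (μ : Measure Ω) [IsProbabilityMeasure μ] (T : ℕ)
    (W : Ω → Fin (T + 1)) (X : Ω → E) (Y : Fin (T + 1) → Ω → ℝ)
    (hW : Measurable W) (hY : ∀ w, Measurable (Y w))
    (hYint : ∀ w, Integrable (Y w) μ)
    (p : Fin (T + 1) → Ω → ℝ)
    (hp : ∀ w, p w = μ[(fun ω => if W ω = w then (1 : ℝ) else 0) |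
        MeasurableSpace.comap X inferInstance])
    (hoverlap : ∀ w, ∀ᵐ ω ∂μ, 0 < p w ω)
    (hmX : MeasurableSpace.comap X inferInstance ≤ mΩ)
    (hstrong : CondIndepFun (MeasurableSpace.comap X inferInstance) hmX
        W (fun ω (w : Fin (T + 1)) => Y w ω) μ)
    (w w' : Fin (T + 1)) :
    μ[(fun ω => Y w' ω - Y w ω) |
        MeasurableSpace.comap (fun ω (v : Fin T) => p v.castSucc ω) inferInstance]
      =ᵐ[μ] fun ω =>
        ((μ[(fun ω' => (if W ω' = w' then (1 : ℝ) else 0) * Y (W ω') ω') |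
            MeasurableSpace.comap (fun ω'' (v : Fin T) => p v.castSucc ω'') inferInstance]) ω)
          / ((μ[(fun ω' => if W ω' = w' then (1 : ℝ) else 0) |
            MeasurableSpace.comap (fun ω'' (v : Fin T) => p v.castSucc ω'') inferInstance]) ω)
        - ((μ[(fun ω' => (if W ω' = w then (1 : ℝ) else 0) * Y (W ω') ω') |
            MeasurableSpace.comap (fun ω'' (v : Fin T) => p v.castSucc ω'') inferInstance]) ω)
          / ((μ[(fun ω' => if W ω' = w then (1 : ℝ) else 0) |
            MeasurableSpace.comap (fun ω'' (v : Fin T) => p v.castSucc ω'') inferInstance]) ω) := by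
  have hind : ∀ v, (fun ω => if W ω = v then (1 : ℝ) else 0) = (W ⁻¹' {v}).indicator fun _ => 1 :=
    fun v => funext fun ω => by by_cases h : W ω = v <;> simp [h]
  have hobs : ∀ v, (fun ω => (if W ω = v then (1 : ℝ) else 0) * Y (W ω) ω)
      = (W ⁻¹' {v}).indicator (Y v) :=
    fun v => funext fun ω => by by_cases h : W ω = v <;> simp [h]
  have hmean (v : Fin (T + 1)) :=
    condExp_indicator_div_ae_eq_condExp_of_condIndepFun hW (hY v) (hYint v)
      (hstrong.comp measurable_id (measurable_pi_apply v))
      (fun w => (hp w).trans (congrArg _ (hind w))) (hoverlap v)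
  simp only [hind, hobs]
  filter_upwards [condExp_sub (hYint w') (hYint w) _, hmean w', hmean w] with ω hsub h' h
  rw [h', h]
  exact hsub

/-- Under strong unconfoundedness and overlap, the conditional average
treatment effect given the full propensity score vector `(p(1|X),...,p(T-1|X))` is
identified: `E[Y(w') - Y(w) | p(1|X),...,p(T-1|X)]
  = E[Y^obs | W = w', p-vector] - E[Y^obs | W = w, p-vector]` a.s., where the conditional
expectations given the event `W = v` and the score vector are the ratios
`E[1{W=v}·Y^obs | p-vector] / E[1{W=v} | p-vector]`.
(Treatments are indexed by `Fin (T+1)`; the vector collects the first `T` scores.) -/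
theorem cate_identified_by_ps_vector {Ω E : Type*} [mΩ : MeasurableSpace Ω]
    [StandardBorelSpace Ω] [MeasurableSpace E]
    (μ : Measure Ω) [IsProbabilityMeasure μ] (T : ℕ)
    (W : Ω → Fin (T + 1)) (X : Ω → E) (Y : Fin (T + 1) → Ω → ℝ)
    (hW : Measurable W) (hX : Measurable X) (hY : ∀ w, Measurable (Y w))
    (hYint : ∀ w, Integrable (Y w) μ)
    (p : Fin (T + 1) → Ω → ℝ)
    (hp : ∀ w, p w = μ[(fun ω => if W ω = w then (1 : ℝ) else 0) |
        MeasurableSpace.comap X inferInstance])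
    (hoverlap : ∀ w, ∀ᵐ ω ∂μ, 0 < p w ω)
    (hmX : MeasurableSpace.comap X inferInstance ≤ mΩ)
    (hstrong : CondIndepFun (MeasurableSpace.comap X inferInstance) hmX
        W (fun ω (w : Fin (T + 1)) => Y w ω) μ)
    (w w' : Fin (T + 1)) :
    μ[(fun ω => Y w' ω - Y w ω) |
        MeasurableSpace.comap (fun ω (v : Fin T) => p v.castSucc ω) inferInstance]
      =ᵐ[μ] fun ω =>
        ((μ[(fun ω' => (if W ω' = w' then (1 : ℝ) else 0) * Y (W ω') ω') |
            MeasurableSpace.comap (fun ω'' (v : Fin T) => p v.castSucc ω'') inferInstance]) ω)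
          / ((μ[(fun ω' => if W ω' = w' then (1 : ℝ) else 0) |
            MeasurableSpace.comap (fun ω'' (v : Fin T) => p v.castSucc ω'') inferInstance]) ω)
        - ((μ[(fun ω' => (if W ω' = w then (1 : ℝ) else 0) * Y (W ω') ω') |
            MeasurableSpace.comap (fun ω'' (v : Fin T) => p v.castSucc ω'') inferInstance]) ω)
          / ((μ[(fun ω' => if W ω' = w then (1 : ℝ) else 0) |
            MeasurableSpace.comap (fun ω'' (v : Fin T) => p v.castSucc ω'') inferInstance]) ω) :=
  cate_identified_by_ps_vector_general (mΩ := mΩ) μ T W X Y hW hY hYint p hp hoverlap hmX hstrong w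
    w'
end
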